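/- For a regular Hausdorff topological space X the following conditions are equivalent: (1) X has a countable k-network (i.e. X is an ℵ₀-space); (2) X is the image of a separable metrizable space under a subproper map; (3) X is k*-metrizable and has a countable network. -/

import Mathlib

open Filter Topology Set

universe u

/-- A Hausdorff space `X` is k*-metrizable if it is the image of a metrizable space `M`
under a continuous surjection admitting a section which preserves precompact sets. -/
def KStarMetrizable (X : Type u) [TopologicalSpace X] : Prop :=
  ∃ (M : Type u) (_ : MetricSpace M) (f : M → X) (s : X → M),
    Continuous f ∧ Function.Surjective f ∧ (∀ x, f (s x) = x) ∧
    ∀ K : Set X, IsCompact K → IsCompact (closure (s '' K))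

/-!
A map is subproper exactly when it has a section `s` sending compact sets to relatively compact
ones, which gives (2) ⇔ (3) once `range s` is known to be separable: the preimage of an
`ε`-separated subset of `range s` meets every compact set in a finite set, and such a set is
countable in a space with a countable network. For (2) ⇒ (1), the images of a countable base
under a subproper map form a k-network.

For (1) ⇒ (2), take a countable k-network `𝒩` of closed sets and code a point `x` by the
subfamily of `𝒩` of sets containing `x`, a point of the Cantor cube `𝒩 → Bool`. The space of codes
of subfamilies that form a network at some point maps continuously onto `X`, and regularity
together with the k-network property shows that limits of codes of points of a compact set are
again codes, so the coding map is a section with relatively compact images of compact sets.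
-/

open TopologicalSpace Function Metric

section Networks

variable {X : Type u} [TopologicalSpace X]

def IsNetwork (𝒩 : Set (Set X)) : Prop :=
  ∀ U : Set X, IsOpen U → ∀ x ∈ U, ∃ N ∈ 𝒩, x ∈ N ∧ N ⊆ U

def IsKNetwork (𝒩 : Set (Set X)) : Prop :=
  ∀ U : Set X, IsOpen U → ∀ K : Set X, IsCompact K → K ⊆ U →
    ∃ 𝓕 ⊆ 𝒩, 𝓕.Finite ∧ K ⊆ ⋃₀ 𝓕 ∧ ⋃₀ 𝓕 ⊆ U

theorem IsKNetwork.isNetwork {𝒩 : Set (Set X)} (h : IsKNetwork 𝒩) : IsNetwork 𝒩 := by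
  intro U hU x hx
  obtain ⟨𝓕, h𝓕, -, hx𝓕, h𝓕U⟩ := h U hU {x} isCompact_singleton (singleton_subset_iff.2 hx)
  obtain ⟨N, hN, hxN⟩ := hx𝓕 rfl
  exact ⟨N, h𝓕 hN, hxN, (subset_sUnion_of_mem hN).trans h𝓕U⟩

theorem IsKNetwork.image_closure [RegularSpace X] {𝒩 : Set (Set X)} (h : IsKNetwork 𝒩) :
    IsKNetwork (closure '' 𝒩) := by
  intro U hU K hK hKU
  obtain ⟨V, hV, hKV, hVU⟩ := hK.exists_isOpen_closure_subset (hU.mem_nhdsSet.2 hKU)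
  obtain ⟨𝓕, h𝓕, h𝓕fin, hK𝓕, h𝓕V⟩ := h V hV K hK hKV
  refine ⟨closure '' 𝓕, image_mono h𝓕, h𝓕fin.image _, ?_, ?_⟩
  · exact hK𝓕.trans (sUnion_mono_subsets fun _ => subset_closure)
  · rintro x ⟨-, ⟨F, hF, rfl⟩, hx⟩
    exact hVU (closure_mono ((subset_sUnion_of_mem hF).trans h𝓕V) hx)

/-- Each point of `A` is the only point of `A` in some finite intersection of members of the
network; otherwise a sequence of other points of `A` converges to it. -/
theorem countable_of_finite_inter_isCompact [T1Space X] {𝒩 : Set (Set X)} (hc : 𝒩.Countable)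
    (hn : IsNetwork 𝒩) {A : Set X} (hA : ∀ K, IsCompact K → (A ∩ K).Finite) : A.Countable := by
  classical
  obtain ⟨N, h𝒩N⟩ := countable_iff_exists_subset_range.1 hc
  have isolated : ∀ x ∈ A, ∃ k, ∀ y ∈ A, (∀ n < k, x ∈ N n → y ∈ N n) → y = x := by
    by_contra! h
    obtain ⟨x, -, hx⟩ := h
    choose y hyA hyN hyx using hx
    have hlim : Tendsto y atTop (𝓝 x) := by
      refine (nhds_basis_opens x).tendsto_right_iff.2 fun U ⟨hxU, hU⟩ => ?_
      obtain ⟨A, hA, hxn, hnU⟩ := hn U hU x hxU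
      obtain ⟨n, rfl⟩ := h𝒩N hA
      filter_upwards [eventually_gt_atTop n] with k hk using hnU (hyN k n hk hxn)
    have hfin : (range y).Finite :=
      (hA _ hlim.isCompact_insert_range).subset
        (range_subset_iff.2 fun k => ⟨hyA k, mem_insert_of_mem _ (mem_range_self k)⟩)
    have hopen : IsOpen (range y \ {x})ᶜ := (hfin.sdiff.isClosed).isOpen_compl
    obtain ⟨k, hk⟩ := (hlim.eventually (hopen.mem_nhds fun h => h.2 rfl)).exists
    exact hk ⟨mem_range_self k, hyx k⟩
  choose! k hk using isolated
  refine MapsTo.countable_of_injOn (f := fun x => (k x, {n ∈ Finset.range (k x) | x ∈ N n}))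
    (mapsTo_univ _ _) (fun x hx x' hx' hxx' => ?_) countable_univ
  simp only [Prod.mk.injEq] at hxx'
  refine hk x' hx' x hx fun n hn hx'n => ?_
  have : n ∈ {n ∈ Finset.range (k x) | x ∈ N n} := by
    rw [hxx'.2, Finset.mem_filter, Finset.mem_range]
    exact ⟨hn, hx'n⟩
  exact (Finset.mem_filter.1 this).2

end Networks

section Subproper

variable {X : Type u} [TopologicalSpace X]

def IsSubproper {M : Type*} [TopologicalSpace M] (f : M → X) : Prop :=
  Continuous f ∧ Surjective f ∧
    ∃ Z : Set M, f '' Z = univ ∧ ∀ K : Set X, IsCompact K → IsCompact (closure (Z ∩ f ⁻¹' K))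

def IsSubproperImage (X : Type u) [TopologicalSpace X] : Prop :=
  ∃ (M : Type u) (_ : MetricSpace M), SeparableSpace M ∧ ∃ f : M → X, IsSubproper f

variable {M : Type*} [TopologicalSpace M] {f : M → X}

theorem isSubproper_of_leftInverse {s : X → M} (hf : Continuous f) (hfs : LeftInverse f s)
    (hs : ∀ K : Set X, IsCompact K → IsCompact (closure (s '' K))) : IsSubproper f := by
  refine ⟨hf, hfs.surjective, range s, by rw [← range_comp, hfs.id, range_id], fun K hK => ?_⟩
  convert hs K hK using 2
  ext m
  constructor
  · rintro ⟨⟨x, rfl⟩, hx⟩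
    exact ⟨x, by rwa [mem_preimage, hfs x] at hx, rfl⟩
  · rintro ⟨x, hx, rfl⟩
    exact ⟨mem_range_self x, by rwa [mem_preimage, hfs x]⟩

theorem IsSubproper.exists_leftInverse (hf : IsSubproper f) :
    ∃ s : X → M, LeftInverse f s ∧ ∀ K : Set X, IsCompact K → IsCompact (closure (s '' K)) := by
  obtain ⟨-, -, Z, hZ, hZK⟩ := hf
  have hsec (x : X) : ∃ z ∈ Z, f z = x := by rw [← mem_image, hZ]; exact mem_univ x
  choose s hsZ hfs using hsec
  refine ⟨s, hfs, fun K hK => (hZK K hK).of_isClosed_subset isClosed_closure (closure_mono ?_)⟩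
  rintro - ⟨x, hx, rfl⟩
  exact ⟨hsZ x, by rwa [mem_preimage, hfs x]⟩

theorem IsSubproper.isKNetwork_image [T2Space X] (hf : IsSubproper f) {ℬ : Set (Set M)}
    (hℬ : IsTopologicalBasis ℬ) : IsKNetwork ((f '' ·) '' ℬ) := by
  obtain ⟨hfc, -, Z, hZ, hZK⟩ := hf
  intro U hU K hK hKU
  have hC : closure (Z ∩ f ⁻¹' K) ⊆ f ⁻¹' U :=
    (closure_minimal inter_subset_right (hK.isClosed.preimage hfc)).trans (preimage_mono hKU)
  rw [hℬ.open_eq_sUnion' (hU.preimage hfc), sUnion_eq_biUnion] at hC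
  obtain ⟨𝓑, h𝓑, h𝓑fin, hC𝓑⟩ :=
    (hZK K hK).elim_finite_subcover_image (c := id) (fun b hb => hℬ.isOpen hb.1) hC
  refine ⟨(f '' ·) '' 𝓑, image_mono fun b hb => (h𝓑 hb).1, h𝓑fin.image _, fun x hx => ?_, ?_⟩
  · obtain ⟨z, hz, rfl⟩ : x ∈ f '' Z := by rw [hZ]; exact mem_univ x
    obtain ⟨b, hb, hzb⟩ := mem_iUnion₂.1 (hC𝓑 (subset_closure ⟨hz, hx⟩))
    exact ⟨f '' b, mem_image_of_mem _ hb, mem_image_of_mem f hzb⟩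
  · rintro - ⟨-, ⟨b, hb, rfl⟩, z, hzb, rfl⟩
    exact (h𝓑 hb).2 hzb

theorem isSubproperImage_of_leftInverse {M : Type u} [TopologicalSpace M] [MetrizableSpace M]
    [SeparableSpace M] {f : M → X} {s : X → M} (hf : Continuous f) (hfs : LeftInverse f s)
    (hs : ∀ K : Set X, IsCompact K → IsCompact (closure (s '' K))) : IsSubproperImage X :=
  let _ := metrizableSpaceMetric M
  ⟨M, _, ‹_›, f, isSubproper_of_leftInverse hf hfs hs⟩

end Subproper

namespace NetworkCode

variable {X : Type u} (𝒩 : Set (Set X))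

open scoped Classical in
noncomputable def encode (x : X) : 𝒩 → Bool := fun N => decide (x ∈ (N : Set X))

variable {𝒩} in
theorem encode_eq_true {x : X} {N : 𝒩} : encode 𝒩 x N = true ↔ x ∈ (N : Set X) := by
  simp [encode]

variable [TopologicalSpace X]

def Codes (σ : 𝒩 → Bool) (a : X) : Prop :=
  (∀ N, σ N = true → a ∈ (N : Set X)) ∧ ∀ U, IsOpen U → a ∈ U → ∃ N, σ N = true ∧ (N : Set X) ⊆ U

def space : Set (𝒩 → Bool) := {σ | ∃ a, Codes 𝒩 σ a}

noncomputable def decode (σ : space 𝒩) : X := σ.2.choose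

variable {𝒩}

theorem codes_decode (σ : space 𝒩) : Codes 𝒩 σ (decode 𝒩 σ) := σ.2.choose_spec

theorem codes_encode (h𝒩 : IsNetwork 𝒩) (x : X) : Codes 𝒩 (encode 𝒩 x) x := by
  refine ⟨fun N hN => encode_eq_true.1 hN, fun U hU hxU => ?_⟩
  obtain ⟨N, hN, hxN, hNU⟩ := h𝒩 U hU x hxU
  exact ⟨⟨N, hN⟩, encode_eq_true.2 hxN, hNU⟩

theorem Codes.eq [T1Space X] {σ : 𝒩 → Bool} {a b : X} (ha : Codes 𝒩 σ a) (hb : Codes 𝒩 σ b) :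
    a = b := by
  refine (specializes_iff_forall_open.2 fun U hU haU => ?_).eq.symm
  obtain ⟨N, hσN, hNU⟩ := ha.2 U hU haU
  exact hNU (hb.1 N hσN)

theorem continuous_decode : Continuous (decode 𝒩) := by
  refine continuous_def.2 fun U hU => isOpen_iff_forall_mem_open.2 fun σ hσ => ?_
  obtain ⟨N, hσN, hNU⟩ := (codes_decode σ).2 U hU hσ
  refine ⟨{τ | τ.1 N = true}, fun τ hτ => hNU ((codes_decode τ).1 N hτ), ?_, hσN⟩
  have hcont : Continuous fun τ : space 𝒩 => τ.1 N :=
    (continuous_apply N).comp continuous_subtype_val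
  exact hcont.isOpen_preimage {true} (isOpen_discrete _)

theorem closure_image_encode_subset [RegularSpace X] (hclosed : ∀ N ∈ 𝒩, IsClosed N)
    (h𝒩 : IsKNetwork 𝒩) {K : Set X} (hK : IsCompact K) : closure (encode 𝒩 '' K) ⊆ space 𝒩 := by
  intro σ hσ
  obtain ⟨u, hKu, huσ⟩ := mem_closure_iff_ultrafilter.1 hσ
  set 𝒰 := Ultrafilter.ofComapInfPrincipal hKu
  have hK𝒰 : K ∈ 𝒰 := Ultrafilter.ofComapInfPrincipal_mem hKu
  have hlim : Tendsto (encode 𝒩) 𝒰 (𝓝 σ) := by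
    rw [Tendsto, ← Ultrafilter.coe_map, Ultrafilter.ofComapInfPrincipal_eq_of_map]
    exact huσ
  have hev (N : 𝒩) : ∀ᶠ x in 𝒰, encode 𝒩 x N = σ N := by
    simpa only [nhds_discrete, tendsto_pure] using tendsto_pi_nhds.1 hlim N
  obtain ⟨a, -, ha⟩ := hK.ultrafilter_le_nhds 𝒰 (le_principal_iff.2 hK𝒰)
  refine ⟨a, fun N hσN => ?_, fun U hU haU => ?_⟩
  · refine (hclosed N N.2).mem_of_tendsto ha ((hev N).mono fun x hx => ?_)
    rwa [hσN, encode_eq_true] at hx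
  · obtain ⟨C, hC, hCc, hCU⟩ := exists_mem_nhds_isClosed_subset (hU.mem_nhds haU)
    obtain ⟨𝓕, h𝓕, h𝓕fin, hK𝓕, h𝓕U⟩ :=
      h𝒩 U hU (K ∩ C) (hK.inter_right hCc) (inter_subset_right.trans hCU)
    obtain ⟨F, hF𝓕, hF𝒰⟩ := (Ultrafilter.finite_sUnion_mem_iff h𝓕fin).1
      (Filter.mem_of_superset (inter_mem hK𝒰 (ha hC)) hK𝓕)
    refine ⟨⟨F, h𝓕 hF𝓕⟩, ?_, (subset_sUnion_of_mem hF𝓕).trans h𝓕U⟩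
    obtain ⟨x, hx, hxF⟩ := ((hev ⟨F, h𝓕 hF𝓕⟩).and hF𝒰).exists
    rw [← hx, encode_eq_true]
    exact hxF

end NetworkCode

open NetworkCode in
theorem isSubproperImage_of_countable_kNetwork {X : Type u} [TopologicalSpace X] [T1Space X]
    [RegularSpace X] {𝒩 : Set (Set X)} (hc : 𝒩.Countable) (hk : IsKNetwork 𝒩) :
    IsSubproperImage X := by
  set 𝒞 := closure '' 𝒩
  have : Countable 𝒞 := (hc.image _).to_subtype
  have hclosed : ∀ C ∈ 𝒞, IsClosed C := by
    rintro - ⟨N, -, rfl⟩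
    exact isClosed_closure
  have hk𝒞 : IsKNetwork 𝒞 := hk.image_closure
  let s (x : X) : space 𝒞 := ⟨encode 𝒞 x, x, codes_encode hk𝒞.isNetwork x⟩
  refine isSubproperImage_of_leftInverse (s := s) continuous_decode
    (fun x => (codes_decode (s x)).eq (codes_encode hk𝒞.isNetwork x)) fun K hK => ?_
  rw [IsEmbedding.subtypeVal.closure_eq_preimage_closure_image, image_image]
  exact IsInducing.subtypeVal.isCompact_preimage' isClosed_closure.isCompact
    (by rw [Subtype.range_coe]; exact closure_image_encode_subset hclosed hk𝒞 hK)

section Separable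

open scoped NNReal ENNReal

variable {M : Type*} [PseudoEMetricSpace M]

theorem Metric.IsSeparated.finite_of_subset_isCompact {ε : ℝ≥0} (hε : ε ≠ 0) {C A : Set M}
    (hC : IsSeparated ε C) (hA : IsCompact A) (hCA : C ⊆ A) : C.Finite := by
  obtain ⟨N, -, hNfin, hN⟩ := exists_finite_isCover_of_isCompact (ε := ε / 2) (by simpa) hA
  have hCN : C.encard ≤ N.encard := calc
    C.encard ≤ packingNumber (2 * (ε / 2)) A :=
      IsSeparated.encard_le_packingNumber hCA (by rwa [two_mul, add_halves])
    _ ≤ externalCoveringNumber (ε / 2) A := packingNumber_two_mul_le_externalCoveringNumber _ _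
    _ ≤ N.encard := hN.externalCoveringNumber_le_encard
  exact encard_lt_top_iff.1 (hCN.trans_lt hNfin.encard_lt_top)

theorem Metric.exists_maximal_isSeparated (ε : ℝ≥0∞) (s : Set M) :
    ∃ D, Maximal (fun D => D ⊆ s ∧ IsSeparated ε D) D :=
  zorn_subset _ fun c hcs hc => ⟨⋃₀ c, ⟨sUnion_subset fun _ ht => (hcs ht).1,
    (pairwise_sUnion hc.directedOn).2 fun _ ht => (hcs ht).2⟩, fun _ => subset_sUnion_of_mem⟩

theorem isSeparable_range_of_isCompact_closure_image {X : Type*} [TopologicalSpace X]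
    [T1Space X] {𝒩 : Set (Set X)} (hc : 𝒩.Countable) (hn : IsNetwork 𝒩) {s : X → M}
    (hs : Injective s) (hsK : ∀ K : Set X, IsCompact K → IsCompact (closure (s '' K))) :
    IsSeparable (range s) := by
  suffices h : ∀ ε > 0, ∃ D : Set M, D.Countable ∧ range s ⊆ ⋃ y ∈ D, closedEBall y ε by
    obtain ⟨t, -, htc, ht⟩ := EMetric.subset_countable_closure_of_almost_dense_set _ h
    exact ⟨t, htc, ht⟩
  intro ε hε
  obtain ⟨δ, hδ, hδε⟩ := ENNReal.lt_iff_exists_nnreal_btwn.1 hε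
  obtain ⟨D, hD⟩ := exists_maximal_isSeparated δ (range s)
  have hfin (K : Set X) (hK : IsCompact K) : (s ⁻¹' D ∩ K).Finite :=
    ((hD.1.2.subset (image_subset_iff.2 inter_subset_left)).finite_of_subset_isCompact
      (ENNReal.coe_pos.1 hδ).ne' (hsK K hK)
      ((image_mono inter_subset_right).trans subset_closure)).of_finite_image hs.injOn
  refine ⟨D, ?_, ?_⟩
  · rw [← image_preimage_eq_of_subset hD.1.1]
    exact (countable_of_finite_inter_isCompact hc hn hfin).image s
  · exact (isCover_iff_subset_iUnion_closedEBall.1 (IsCover.of_maximal_isSeparated hD)).trans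
      (iUnion₂_mono fun y _ => closedEBall_subset_closedEBall hδε.le)

end Separable

section Equivalences

variable {X : Type u} [TopologicalSpace X]

theorem IsSubproperImage.exists_countable_kNetwork [T2Space X] (h : IsSubproperImage X) :
    ∃ 𝒩 : Set (Set X), 𝒩.Countable ∧ IsKNetwork 𝒩 := by
  obtain ⟨M, _, _, f, hf⟩ := h
  obtain ⟨ℬ, hℬc, -, hℬ⟩ := exists_countable_basis M
  exact ⟨_, hℬc.image _, hf.isKNetwork_image hℬ⟩

theorem IsSubproperImage.kStarMetrizable (h : IsSubproperImage X) : KStarMetrizable X := by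
  obtain ⟨M, _, -, f, hf⟩ := h
  obtain ⟨s, hfs, hs⟩ := hf.exists_leftInverse
  exact ⟨M, _, f, s, hf.1, hf.2.1, hfs, hs⟩

theorem KStarMetrizable.isSubproperImage [T1Space X] (hX : KStarMetrizable X)
    {𝒩 : Set (Set X)} (hc : 𝒩.Countable) (hn : IsNetwork 𝒩) : IsSubproperImage X := by
  obtain ⟨M, _, f, s, hf, -, hfs, hs⟩ := hX
  have : SeparableSpace (closure (range s)) :=
    (isSeparable_range_of_isCompact_closure_image hc hn (LeftInverse.injective hfs)
      hs).closure.separableSpace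
  have hemb := (isClosed_closure (s := range s)).isClosedEmbedding_subtypeVal
  refine isSubproperImage_of_leftInverse (f := f ∘ Subtype.val)
    (s := fun x => ⟨s x, subset_closure (mem_range_self x)⟩) (hf.comp continuous_subtype_val) hfs
    fun K hK => ?_
  rw [hemb.isEmbedding.closure_eq_preimage_closure_image, image_image]
  exact hemb.isCompact_preimage (hs K hK)

end Equivalences

/-- For a regular Hausdorff space `X` the following are equivalent:
(1) `X` has a countable k-network (`X` is an ℵ₀-space);
(2) `X` is the image of a separable metrizable space under a subproper map;
(3) `X` is k*-metrizable and has a countable network. -/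
theorem stmt_12 {X : Type u} [TopologicalSpace X] [T2Space X] [RegularSpace X] :
    List.TFAE
      [ -- (1) countable k-network
        ∃ 𝒩 : Set (Set X), 𝒩.Countable ∧
          ∀ U : Set X, IsOpen U → ∀ K : Set X, IsCompact K → K ⊆ U →
            ∃ 𝓕 ⊆ 𝒩, 𝓕.Finite ∧ K ⊆ ⋃₀ 𝓕 ∧ ⋃₀ 𝓕 ⊆ U,
        -- (2) image of a separable metrizable space under a subproper map
        ∃ (M : Type u) (_ : MetricSpace M), TopologicalSpace.SeparableSpace M ∧
          ∃ f : M → X, Continuous f ∧ Function.Surjective f ∧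
            ∃ Z : Set M, f '' Z = univ ∧
              ∀ K : Set X, IsCompact K → IsCompact (closure (Z ∩ f ⁻¹' K)),
        -- (3) k*-metrizable with a countable network
        KStarMetrizable X ∧ ∃ 𝒩 : Set (Set X), 𝒩.Countable ∧
          ∀ U : Set X, IsOpen U → ∀ x ∈ U, ∃ N ∈ 𝒩, x ∈ N ∧ N ⊆ U ] := by
  tfae_have 1 → 2 := fun ⟨_, hc, hk⟩ => isSubproperImage_of_countable_kNetwork hc hk
  tfae_have 2 → 1 := IsSubproperImage.exists_countable_kNetwork
  tfae_have 2 → 3 := fun h =>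
    let ⟨𝒩, hc, hk⟩ := IsSubproperImage.exists_countable_kNetwork h
    ⟨IsSubproperImage.kStarMetrizable h, 𝒩, hc, hk.isNetwork⟩
  tfae_have 3 → 2 := fun ⟨hX, _, hc, hn⟩ => hX.isSubproperImage hc hn
  tfae_finish
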